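/- arXiv:2511.21147 — 2 statements merged into one kernel-verified Lean document; each statement's English description precedes it below -/
import Mathlib

section
/- In the instance of Example 7 (three asylum seekers with s(a₁) > s(a₂) ≥ s(a₃), wait times {w_l, w_h}, quotas q_{m₁} = s(a₁), q_{m₂} = q_{m₃} = 1, capacities r^{w_l}_m = 2 for all m, and the stated preferences and priorities), the allocation Y₁ = {x₂, x₆, x₈} ∪ {(a_n, m₄, w_h) : n > 3} is the unique stable allocation under the true preference profile P, while under the misreport P̂_{a₂}: x₅ − x₆ − x₄ both Y₁ and Y₂ = {x₁, x₅, x₇} ∪ {(a_n, m₄, w_h) : n > 3} are stable. -/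
/-- A contract: `(asylum seeker, member state, wait time)`.  Asylum seekers,
member states and wait times are labelled by naturals. -/
abbrev Ctr3 := ℕ × ℕ × ℕ

open Classical in
/-- Pick, from a nonempty set of contracts at member state `m`, the
lowest-wait-time contract of the highest-priority asylum seeker. -/
noncomputable def pick3 (π : ℕ → ℕ) (m : ℕ) (Z : Finset Ctr3)
    (h : Z.Nonempty) : Ctr3 :=
  let k := (Z.image fun x => toLex ((π x.1 : ℕ), toLex (x.2.2, x.1))).min'
    (h.image _)
  ((ofLex (ofLex k).2).2, m, (ofLex (ofLex k).2).1)

open Classical in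
/-- The greedy run of member state `m`'s choice rule `Ĉ_m`, with fuel:
process asylum seekers by priority `π`, accept for each the lowest-wait-time
contract with remaining capacity, stop at quota `q`. -/
noncomputable def run3 (s : ℕ → ℕ) (q : ℕ) (r π : ℕ → ℕ) (m : ℕ)
    (X' : Finset Ctr3) : ℕ → Finset Ctr3 → Finset Ctr3
  | 0, acc => acc
  | n+1, acc =>
    let Z : Finset Ctr3 := X'.filter fun x => x.2.1 = m ∧
      (acc.filter fun y => y.2.2 = x.2.2).card < r x.2.2 ∧
      ∀ y ∈ acc, y.1 ≠ x.1
    if q ≤ acc.sum (fun x => s x.1) then acc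
    else if h : Z.Nonempty then
      run3 s q r π m X' n (insert (pick3 π m Z h) acc)
    else acc

/-- Member state `m`'s choice rule `Ĉ_m` on sets of contracts. -/
noncomputable def Chat3 (s : ℕ → ℕ) (q : ℕ) (r π : ℕ → ℕ) (m : ℕ)
    (X' : Finset Ctr3) : Finset Ctr3 :=
  run3 s q r π m X' (X'.card + 1) ∅

/-- Priorities of Example 7: `m₂` ranks `a₃ − a₂ − a₁`; the other member
states rank `a₁ − a₂ − a₃` (states `m₁ m₂ m₃ m₄ = 0 1 2 3`, asylum seekers
`a₁ a₂ a₃ = 0 1 2`). -/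
def π16 : ℕ → ℕ → ℕ := fun m a => if m = 1 then 2 - a else a

/-- Quotas of Example 7: `q_{m₁} = s(a₁)`, `q_{m₂} = q_{m₃} = 1`,
`q_{m₄} = Σ_a s(a)`. -/
def q16 (s : ℕ → ℕ) : ℕ → ℕ :=
  fun m => if m = 0 then s 0 else if m = 3 then s 0 + s 1 + s 2 else 1

/-- Capacities of Example 7 (wait times `w_l w_h = 0 1`):
`r^{w_l}_m = 2` and `r^{w_h}_m = Σ_a s(a)` for every member state. -/
def r16 (s : ℕ → ℕ) : ℕ → ℕ → ℕ :=
  fun _ w => if w = 0 then 2 else s 0 + s 1 + s 2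

/-- An allocation: at most one contract per asylum seeker, capacities
respected, contracts drawn from the universe of the instance. -/
def Alloc16 (s : ℕ → ℕ) (Y : Finset Ctr3) : Prop :=
  (∀ x ∈ Y, x.1 < 3 ∧ x.2.1 < 4 ∧ x.2.2 < 2) ∧
  (∀ a : ℕ, (Y.filter fun x => x.1 = a).card ≤ 1) ∧
  (∀ m w : ℕ, (Y.filter fun x => x.2.1 = m ∧ x.2.2 = w).card ≤ r16 s m w)

/-- Stability with respect to the preference profile `p` (where `p a` ranks
`a`'s contracts, lower value = better). -/
def Stable16 (s : ℕ → ℕ) (p : ℕ → Ctr3 → ℕ) (Y : Finset Ctr3) : Prop :=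
  (∀ m : ℕ, Chat3 s (q16 s m) (r16 s m) (π16 m) m Y =
    Y.filter fun x => x.2.1 = m) ∧
  ∀ x : Ctr3, x.1 < 3 → x.2.1 < 4 → x.2.2 < 2 → x ∉ Y →
    (∀ y ∈ Y, y.1 = x.1 → p x.1 x < p x.1 y) →
    x ∉ Chat3 s (q16 s x.2.1) (r16 s x.2.1) (π16 x.2.1) x.2.1 (insert x Y)

/-!
Every choice needed here is settled by the first one or two steps of the greedy run. At `m₁`
the asylum seeker `a₁` has top priority and alone fills the quota `s(a₁)`; at `m₂`, whose quota
`1` is filled by any single contract, `a₃` has top priority. So in a stable allocation `a₁` holds `x₁` or `x₂`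
(otherwise `x₂` blocks) and `a₃` holds `x₇` or `x₈` (otherwise `x₈` blocks). If `a₁` held `x₁`,
the quota of `m₂` would leave `a₃` with `x₇`, and then `x₄` would block, as `a₂` outranks `a₁`
at `m₂`. Hence `a₁` holds `x₂`, which crowds `x₅` and `x₇` out of `m₁`; so `a₃` holds `x₈`,
which crowds `x₄` out of `m₂`, and `a₂` must hold `x₆`, or `x₆` blocks.

Conversely, in `Y₂` everybody gets his reported first choice, and in `Y₁` every contract that
somebody prefers to his own lies at `m₁` or `m₂`, where `x₂` resp. `x₈` takes the whole quota.
-/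

open Finset

section Choice

variable {s : ℕ → ℕ} {q : ℕ} {r π : ℕ → ℕ} {m : ℕ} {X' : Finset Ctr3}

/-- The order in which `pick3` selects contracts. -/
def key (π : ℕ → ℕ) (x : Ctr3) : Lex (ℕ × Lex (ℕ × ℕ)) :=
  toLex (π x.1, toLex (x.2.2, x.1))

lemma key_le_iff (x z : Ctr3) : key π x ≤ key π z ↔
    π x.1 < π z.1 ∨ π x.1 = π z.1 ∧ (x.2.2 < z.2.2 ∨ x.2.2 = z.2.2 ∧ x.1 ≤ z.1) := by
  rw [key, key, Prod.Lex.le_iff, Prod.Lex.le_iff]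
  exact Iff.rfl

open Classical in
def candidates (r : ℕ → ℕ) (m : ℕ) (X' acc : Finset Ctr3) : Finset Ctr3 :=
  X'.filter fun x => x.2.1 = m ∧
    (acc.filter fun y => y.2.2 = x.2.2).card < r x.2.2 ∧ ∀ y ∈ acc, y.1 ≠ x.1

lemma mem_candidates_empty {x : Ctr3} :
    x ∈ candidates r m X' ∅ ↔ x ∈ X' ∧ x.2.1 = m ∧ 0 < r x.2.2 := by
  simp [candidates]

open Classical in
lemma run3_succ (n : ℕ) (acc : Finset Ctr3) :
    run3 s q r π m X' (n + 1) acc =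
      if q ≤ acc.sum (fun x => s x.1) then acc
      else if h : (candidates r m X' acc).Nonempty then
        run3 s q r π m X' n (insert (pick3 π m _ h) acc)
      else acc :=
  rfl

lemma pick3_eq_of_isLeast {Z : Finset Ctr3} {h : Z.Nonempty} {x : Ctr3} (hx : x ∈ Z)
    (hm : x.2.1 = m) (hmin : ∀ z ∈ Z, key π x ≤ key π z) : pick3 π m Z h = x := by
  have hk : (Z.image (key π)).min' (h.image _) = key π x :=
    le_antisymm (min'_le _ _ (mem_image_of_mem _ hx))
      (le_min' _ _ _ fun _ hy => by obtain ⟨z, hz, rfl⟩ := mem_image.mp hy; exact hmin z hz)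
  change ((ofLex (ofLex ((Z.image (key π)).min' (h.image _))).2).2, m,
    (ofLex (ofLex ((Z.image (key π)).min' (h.image _))).2).1) = x
  rw [hk, ← hm]
  rfl

lemma subset_run3 (n : ℕ) (acc : Finset Ctr3) : acc ⊆ run3 s q r π m X' n acc := by
  induction n generalizing acc with
  | zero => exact Subset.refl _
  | succ n ih =>
    rw [run3_succ]
    split_ifs
    · exact Subset.refl _
    · exact (subset_insert _ _).trans (ih _)
    · exact Subset.refl _

lemma run3_eq_self_of_le_sum (n : ℕ) {acc : Finset Ctr3} (hq : q ≤ acc.sum fun x => s x.1) :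
    run3 s q r π m X' n acc = acc := by
  cases n with
  | zero => rfl
  | succ n => rw [run3_succ, if_pos hq]

lemma run3_eq_self_of_candidates_eq_empty (n : ℕ) {acc : Finset Ctr3}
    (h : candidates r m X' acc = ∅) : run3 s q r π m X' n acc = acc := by
  cases n with
  | zero => rfl
  | succ n => rw [run3_succ, h]; simp

lemma run3_succ_eq_of_isLeast (n : ℕ) {acc : Finset Ctr3} {x : Ctr3}
    (hq : acc.sum (fun x => s x.1) < q) (hx : x ∈ candidates r m X' acc)
    (hmin : ∀ z ∈ candidates r m X' acc, key π x ≤ key π z) :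
    run3 s q r π m X' (n + 1) acc = run3 s q r π m X' n (insert x acc) := by
  rw [run3_succ, if_neg (not_le.mpr hq), dif_pos ⟨x, hx⟩]
  congr 2
  exact pick3_eq_of_isLeast hx (mem_filter.mp hx).2.1 hmin

lemma Chat3_eq_run3_of_isLeast {x : Ctr3} (hq : 0 < q) (hx : x ∈ X') (hm : x.2.1 = m)
    (hr : 0 < r x.2.2) (hmin : ∀ z ∈ X', z.2.1 = m → key π x ≤ key π z) :
    Chat3 s q r π m X' = run3 s q r π m X' X'.card {x} :=
  run3_succ_eq_of_isLeast _ (by simpa using hq) (mem_candidates_empty.mpr ⟨hx, hm, hr⟩)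
    fun z hz => hmin z (mem_candidates_empty.mp hz).1 (mem_candidates_empty.mp hz).2.1

lemma mem_Chat3_of_isLeast {x : Ctr3} (hx : x ∈ X') (hm : x.2.1 = m) (hq : 0 < q)
    (hr : 0 < r x.2.2) (hmin : ∀ z ∈ X', z.2.1 = m → key π x ≤ key π z) :
    x ∈ Chat3 s q r π m X' := by
  rw [Chat3_eq_run3_of_isLeast hq hx hm hr hmin]
  exact subset_run3 _ _ (mem_singleton_self x)

lemma Chat3_eq_singleton_of_isLeast {x : Ctr3} (hx : x ∈ X') (hm : x.2.1 = m) (hq : 0 < q)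
    (hqs : q ≤ s x.1) (hr : 0 < r x.2.2) (hmin : ∀ z ∈ X', z.2.1 = m → key π x ≤ key π z) :
    Chat3 s q r π m X' = {x} := by
  rw [Chat3_eq_run3_of_isLeast hq hx hm hr hmin, run3_eq_self_of_le_sum _ (by simpa using hqs)]

lemma Chat3_eq_pair {u v : Ctr3} (hu : u ∈ X') (hv : v ∈ X') (hum : u.2.1 = m)
    (hvm : v.2.1 = m) (hne : u.1 ≠ v.1) (hq : s u.1 < q) (hru : 0 < r u.2.2)
    (hrv : 1 < r v.2.2) (hminu : ∀ z ∈ X', z.2.1 = m → key π u ≤ key π z)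
    (hminv : ∀ z ∈ X', z.2.1 = m → z.1 ≠ u.1 → key π v ≤ key π z)
    (honly : ∀ z ∈ X', z.2.1 = m → z.1 = u.1 ∨ z.1 = v.1) :
    Chat3 s q r π m X' = {u, v} := by
  have hcand : ∀ z, z ∈ candidates r m X' {u} ↔ z ∈ X' ∧ z.2.1 = m ∧
      (({u} : Finset Ctr3).filter fun y => y.2.2 = z.2.2).card < r z.2.2 ∧ u.1 ≠ z.1 := by
    simp [candidates]
  have hvu : v ≠ u := fun h => hne (h ▸ rfl)
  obtain ⟨n, hn⟩ := Nat.exists_eq_succ_of_ne_zero (card_pos.mpr ⟨u, hu⟩).ne'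
  rw [Chat3_eq_run3_of_isLeast (Nat.zero_lt_of_lt hq) hu hum hru hminu, hn,
    run3_succ_eq_of_isLeast n (by simpa using hq)
      ((hcand v).mpr ⟨hv, hvm, (card_filter_le _ _).trans_lt (by simpa using hrv), hne⟩)
      fun z hz => hminv z ((hcand z).mp hz).1 ((hcand z).mp hz).2.1 ((hcand z).mp hz).2.2.2.symm,
    pair_comm]
  -- after `u` and `v` nobody is left at `m`, so the run stops whether or not the quota is met
  by_cases hstop : q ≤ s u.1 + s v.1
  · exact run3_eq_self_of_le_sum _ (by rw [sum_pair hvu.symm]; exact hstop)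
  · refine run3_eq_self_of_candidates_eq_empty _ (eq_empty_of_forall_notMem fun z hz => ?_)
    have hz' := mem_filter.mp hz
    rcases honly z hz'.1 hz'.2.1 with h | h
    · exact hz'.2.2.2 u (by simp) h.symm
    · exact hz'.2.2.2 v (by simp) h.symm

lemma Chat3_eq_empty (hnone : ∀ z ∈ X', z.2.1 ≠ m) : Chat3 s q r π m X' = ∅ :=
  run3_eq_self_of_candidates_eq_empty _ <| filter_eq_empty_iff.mpr fun z hz h => hnone z hz h.1

lemma Chat3_eq_filter_of_forall_ne (hnone : ∀ z ∈ X', z.2.1 ≠ m) :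
    Chat3 s q r π m X' = X'.filter fun z => z.2.1 = m := by
  rw [Chat3_eq_empty hnone, eq_comm, filter_eq_empty_iff]
  exact hnone

lemma Chat3_eq_filter_of_filter_eq_singleton {x : Ctr3}
    (h : X'.filter (fun z => z.2.1 = m) = {x}) (hq : 0 < q) (hqs : q ≤ s x.1)
    (hr : 0 < r x.2.2) : Chat3 s q r π m X' = X'.filter fun z => z.2.1 = m := by
  have hx := mem_filter.mp (h ▸ mem_singleton_self x)
  rw [h, Chat3_eq_singleton_of_isLeast hx.1 hx.2 hq hqs hr fun z hz hzm => ?_]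
  rw [eq_of_mem_singleton (h ▸ mem_filter.mpr ⟨hz, hzm⟩ : z ∈ ({x} : Finset Ctr3))]

lemma card_Chat3_le_one (hqs : ∀ a, q ≤ s a) : (Chat3 s q r π m X').card ≤ 1 := by
  rw [Chat3, run3_succ]
  split_ifs
  · simp
  · rw [run3_eq_self_of_le_sum _ (by simpa using hqs _)]
    simp
  · simp

end Choice

local notation "Ĉ[" s ", " m "]" => Chat3 s (q16 s m) (r16 s m) (π16 m) m

abbrev Y₁ : Finset Ctr3 := {(0, 0, 0), (1, 2, 0), (2, 1, 0)}

abbrev Y₂ : Finset Ctr3 := {(0, 1, 0), (1, 0, 0), (2, 0, 0)}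

section Example7

variable {s : ℕ → ℕ}

lemma q16_pos (hpos : ∀ a, 0 < s a) (m : ℕ) : 0 < q16 s m := by
  have := hpos 0
  unfold q16
  split_ifs <;> omega

lemma q16_one_le (hpos : ∀ a, 0 < s a) (a : ℕ) : q16 s 1 ≤ s a := hpos a

lemma q16_two_le (hpos : ∀ a, 0 < s a) (a : ℕ) : q16 s 2 ≤ s a := hpos a

lemma two_le_r16 (hpos : ∀ a, 0 < s a) (m w : ℕ) : 2 ≤ r16 s m w := by
  have := hpos 0
  have := hpos 1
  have := hpos 2
  unfold r16
  split_ifs <;> omega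

lemma r16_pos (hpos : ∀ a, 0 < s a) (m w : ℕ) : 0 < r16 s m w :=
  two_pos.trans_le (two_le_r16 hpos m w)

lemma π16_one (a : ℕ) : π16 1 a = 2 - a := rfl

lemma π16_of_ne_one {m : ℕ} (hm : m ≠ 1) (a : ℕ) : π16 m a = a := if_neg hm

lemma key_x2_le (z : Ctr3) : key (π16 0) (0, 0, 0) ≤ key (π16 0) z := by
  simp only [key_le_iff, π16_of_ne_one zero_ne_one]
  omega

lemma key_x8_le (z : Ctr3) : key (π16 1) (2, 1, 0) ≤ key (π16 1) z := by
  simp only [key_le_iff, π16_one]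
  omega

lemma key_x4_le {z : Ctr3} (hz : z.1 ≤ 1) : key (π16 1) (1, 1, 0) ≤ key (π16 1) z := by
  simp only [key_le_iff, π16_one]
  omega

lemma key_x6_le {z : Ctr3} (hz : 1 ≤ z.1) : key (π16 2) (1, 2, 0) ≤ key (π16 2) z := by
  simp only [key_le_iff, π16_of_ne_one (by decide : 2 ≠ 1)]
  omega

lemma chat16_zero_eq (hpos : ∀ a, 0 < s a) {X : Finset Ctr3} (hX : (0, 0, 0) ∈ X) :
    Ĉ[s, 0] X = {(0, 0, 0)} :=
  Chat3_eq_singleton_of_isLeast hX rfl (q16_pos hpos 0) le_rfl (r16_pos hpos 0 0)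
    fun z _ _ => key_x2_le z

lemma chat16_one_eq (hpos : ∀ a, 0 < s a) {X : Finset Ctr3} (hX : (2, 1, 0) ∈ X) :
    Ĉ[s, 1] X = {(2, 1, 0)} :=
  Chat3_eq_singleton_of_isLeast hX rfl (q16_pos hpos 1) (q16_one_le hpos 2)
    (r16_pos hpos 1 0) fun z _ _ => key_x8_le z

lemma notMem_chat16_zero (hpos : ∀ a, 0 < s a) {X : Finset Ctr3} (hX : (0, 0, 0) ∈ X)
    {x : Ctr3} (hx : x ≠ (0, 0, 0)) : x ∉ Ĉ[s, 0] X := by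
  rw [chat16_zero_eq hpos hX]
  exact notMem_singleton.mpr hx

lemma notMem_chat16_one (hpos : ∀ a, 0 < s a) {X : Finset Ctr3} (hX : (2, 1, 0) ∈ X)
    {x : Ctr3} (hx : x ≠ (2, 1, 0)) : x ∉ Ĉ[s, 1] X := by
  rw [chat16_one_eq hpos hX]
  exact notMem_singleton.mpr hx

lemma chat16_Y₁ (hpos : ∀ a, 0 < s a) : ∀ m, Ĉ[s, m] Y₁ = Y₁.filter fun x => x.2.1 = m
  | 0 => Chat3_eq_filter_of_filter_eq_singleton (x := (0, 0, 0)) (by decide) (q16_pos hpos 0)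
      (by simp [q16]) (r16_pos hpos 0 0)
  | 1 => Chat3_eq_filter_of_filter_eq_singleton (x := (2, 1, 0)) (by decide) (q16_pos hpos 1)
      (q16_one_le hpos 2) (r16_pos hpos 1 0)
  | 2 => Chat3_eq_filter_of_filter_eq_singleton (x := (1, 2, 0)) (by decide) (q16_pos hpos 2)
      (q16_two_le hpos 1) (r16_pos hpos 2 0)
  | m + 3 => Chat3_eq_filter_of_forall_ne (by simp)

lemma chat16_Y₂ (hpos : ∀ a, 0 < s a) (h01 : s 1 < s 0) :
    ∀ m, Ĉ[s, m] Y₂ = Y₂.filter fun x => x.2.1 = m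
  | 0 => by
    rw [Chat3_eq_pair (u := (1, 0, 0)) (v := (2, 0, 0)) (by decide) (by decide) rfl rfl
      (by decide) (by simpa [q16] using h01) (r16_pos hpos 0 0) (two_le_r16 hpos 0 0)
      (by decide) (by decide) (by decide)]
    decide
  | 1 => Chat3_eq_filter_of_filter_eq_singleton (x := (0, 1, 0)) (by decide) (q16_pos hpos 1)
      (q16_one_le hpos 0) (r16_pos hpos 1 0)
  | m + 2 => Chat3_eq_filter_of_forall_ne (by simp)

lemma alloc16_of (hpos : ∀ a, 0 < s a) {Y : Finset Ctr3}
    (hbound : ∀ x ∈ Y, x.1 < 3 ∧ x.2.1 < 4 ∧ x.2.2 < 2)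
    (hinj : ∀ y ∈ Y, ∀ z ∈ Y, y.1 = z.1 → y = z)
    (hcap : ∀ m < 4, ∀ w < 2, (Y.filter fun x => x.2.1 = m ∧ x.2.2 = w).card ≤ 2) :
    Alloc16 s Y := by
  refine ⟨hbound, fun a => card_le_one.mpr fun y hy z hz => ?_, fun m w => ?_⟩
  · rw [mem_filter] at hy hz
    exact hinj y hy.1 z hz.1 (hy.2.trans hz.2.symm)
  · by_cases h : m < 4 ∧ w < 2
    · exact (hcap m h.1 w h.2).trans (two_le_r16 hpos m w)
    · rw [filter_eq_empty_iff.mpr fun x hx hxmw => h ?_, card_empty]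
      · exact Nat.zero_le _
      · exact ⟨hxmw.1 ▸ (hbound x hx).2.1, hxmw.2 ▸ (hbound x hx).2.2⟩

lemma alloc16_Y₁ (hpos : ∀ a, 0 < s a) : Alloc16 s Y₁ :=
  alloc16_of hpos (by decide) (by decide) (by decide)

lemma alloc16_Y₂ (hpos : ∀ a, 0 < s a) : Alloc16 s Y₂ :=
  alloc16_of hpos (by decide) (by decide) (by decide)

lemma ne_of_one_lt_snd_fst {z : Ctr3} {a m w : ℕ} (hz : 1 < z.2.1) (hm : m ≤ 1) :
    z ≠ (a, m, w) := by
  rintro rfl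
  exact absurd hz (not_lt.mpr hm)

lemma stable16_of_notMem_chat (S : Set ℕ) {p : ℕ → Ctr3 → ℕ} {Y : Finset Ctr3}
    (hcover : ∀ a < 3, ∃ y ∈ Y, y.1 = a)
    (hchat : ∀ m, Ĉ[s, m] Y = Y.filter fun x => x.2.1 = m)
    (hpref : ∀ y ∈ Y, ∀ x : Ctr3, x.1 = y.1 → x ≠ y → x.2.1 ∉ S → p y.1 y < p y.1 x)
    (hrej : ∀ x ∉ Y, x.2.1 ∈ S → x ∉ Ĉ[s, x.2.1] (insert x Y)) : Stable16 s p Y := by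
  refine ⟨hchat, fun x hx _ _ hxY hlt => hrej x hxY ?_⟩
  by_contra hS
  obtain ⟨y, hy, hyx⟩ := hcover x.1 hx
  have hyx' := hpref y hy x hyx.symm (fun h => hxY (h ▸ hy)) hS
  rw [hyx] at hyx'
  exact lt_asymm (hlt y hy hyx) hyx'

lemma stable16_Y₁ (hpos : ∀ a, 0 < s a) {p : ℕ → Ctr3 → ℕ}
    (hp0 : ∀ z : Ctr3, z.1 = 0 → z ≠ (0, 1, 0) → z ≠ (0, 0, 0) → p 0 (0, 0, 0) < p 0 z)
    (hp1 : ∀ z : Ctr3, z.1 = 1 → 1 < z.2.1 → z ≠ (1, 2, 0) → p 1 (1, 2, 0) < p 1 z)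
    (hp2 : ∀ z : Ctr3, z.1 = 2 → z ≠ (2, 0, 0) → z ≠ (2, 1, 0) → p 2 (2, 1, 0) < p 2 z) :
    Stable16 s p Y₁ := by
  refine stable16_of_notMem_chat {m | m ≤ 1} (by decide) (chat16_Y₁ hpos) ?_ ?_
  · simp only [mem_insert, mem_singleton, forall_eq_or_imp, forall_eq, Set.mem_ofPred_eq, not_le]
    exact ⟨fun x hx hne hm => hp0 x hx (ne_of_one_lt_snd_fst hm le_rfl) hne,
      fun x hx hne hm => hp1 x hx hm hne,
      fun x hx hne hm => hp2 x hx (ne_of_one_lt_snd_fst hm zero_le_one) hne⟩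
  · rintro ⟨a, m, w⟩ hx (hm : m ≤ 1)
    interval_cases m
    · exact notMem_chat16_zero hpos (mem_insert_of_mem (by decide)) fun h => hx (h ▸ by decide)
    · exact notMem_chat16_one hpos (mem_insert_of_mem (by decide)) fun h => hx (h ▸ by decide)

lemma stable16_Y₂ (hpos : ∀ a, 0 < s a) (h01 : s 1 < s 0) {p : ℕ → Ctr3 → ℕ}
    (hp0 : ∀ z : Ctr3, z.1 = 0 → z ≠ (0, 1, 0) → p 0 (0, 1, 0) < p 0 z)
    (hp1 : ∀ z : Ctr3, z.1 = 1 → z ≠ (1, 0, 0) → p 1 (1, 0, 0) < p 1 z)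
    (hp2 : ∀ z : Ctr3, z.1 = 2 → z ≠ (2, 0, 0) → p 2 (2, 0, 0) < p 2 z) :
    Stable16 s p Y₂ := by
  refine stable16_of_notMem_chat ∅ (by decide) (chat16_Y₂ hpos h01) ?_
    fun _ _ h => absurd h (Set.notMem_empty _)
  simp only [mem_insert, mem_singleton, forall_eq_or_imp, forall_eq]
  exact ⟨fun x hx hne _ => hp0 x hx hne, fun x hx hne _ => hp1 x hx hne,
    fun x hx hne _ => hp2 x hx hne⟩

end Example7

section Uniqueness

variable {s : ℕ → ℕ} {p : ℕ → Ctr3 → ℕ} {Y : Finset Ctr3}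

lemma Alloc16.eq_of_fst_eq (hY : Alloc16 s Y) {y z : Ctr3} (hy : y ∈ Y) (hz : z ∈ Y)
    (h : y.1 = z.1) : y = z :=
  card_le_one.mp (hY.2.1 y.1) y (mem_filter.mpr ⟨hy, rfl⟩) z (mem_filter.mpr ⟨hz, h.symm⟩)

lemma Alloc16.fst_ne_of_snd_fst_ne (hY : Alloc16 s Y) {y z : Ctr3} (hy : y ∈ Y) (hz : z ∈ Y)
    (h : y.2.1 ≠ z.2.1) : y.1 ≠ z.1 :=
  fun h' => h (congrArg (·.2.1) (hY.eq_of_fst_eq hy hz h'))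

lemma Alloc16.eq_of_subset (hY : Alloc16 s Y) {Z : Finset Ctr3} (hZY : Z ⊆ Y)
    (hZ : ∀ a < 3, ∃ z ∈ Z, z.1 = a) : Y = Z := by
  refine Subset.antisymm (fun y hy => ?_) hZY
  obtain ⟨z, hz, hza⟩ := hZ y.1 (hY.1 y hy).1
  rwa [hY.eq_of_fst_eq hy (hZY hz) hza.symm]

lemma Stable16.mem_of_mem_chat (hst : Stable16 s p Y) {x : Ctr3}
    (hx : x.1 < 3 ∧ x.2.1 < 4 ∧ x.2.2 < 2)
    (hpref : ∀ y ∈ Y, y.1 = x.1 → y ≠ x → p x.1 x < p x.1 y)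
    (hacc : x ∈ Ĉ[s, x.2.1] (insert x Y)) : x ∈ Y := by
  by_contra hxY
  exact hst.2 x hx.1 hx.2.1 hx.2.2 hxY
    (fun y hy hyx => hpref y hy hyx (ne_of_mem_of_not_mem hy hxY)) hacc

lemma Stable16.eq_of_snd_fst_eq_one (hpos : ∀ a, 0 < s a) (hst : Stable16 s p Y)
    {u v : Ctr3} (hu : u ∈ Y) (hv : v ∈ Y) (hu1 : u.2.1 = 1) (hv1 : v.2.1 = 1) : u = v := by
  have hcard : (Y.filter fun x => x.2.1 = 1).card ≤ 1 :=
    hst.1 1 ▸ card_Chat3_le_one (q16_one_le hpos)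
  exact card_le_one.mp hcard u (mem_filter.mpr ⟨hu, hu1⟩) v (mem_filter.mpr ⟨hv, hv1⟩)

lemma Stable16.eq_x2_of_snd_fst_eq_zero (hpos : ∀ a, 0 < s a) (hst : Stable16 s p Y)
    (hx2 : (0, 0, 0) ∈ Y) {v : Ctr3} (hv : v ∈ Y) (hv0 : v.2.1 = 0) : v = (0, 0, 0) := by
  have h := hst.1 0
  rw [chat16_zero_eq hpos hx2] at h
  exact mem_singleton.mp (h ▸ mem_filter.mpr ⟨hv, hv0⟩)

lemma x1_mem_or_x2_mem (hpos : ∀ a, 0 < s a) (hst : Stable16 s p Y)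
    (h1b : ∀ z : Ctr3, z.1 = 0 → z ≠ (0, 1, 0) → z ≠ (0, 0, 0) → p 0 (0, 0, 0) < p 0 z) :
    (0, 1, 0) ∈ Y ∨ (0, 0, 0) ∈ Y := by
  by_contra! h
  refine h.2 (hst.mem_of_mem_chat (by decide)
    (fun y hy hy0 hne => h1b y hy0 (ne_of_mem_of_not_mem hy h.1) hne) ?_)
  rw [chat16_zero_eq hpos (mem_insert_self _ _)]
  exact mem_singleton_self _

lemma x7_mem_or_x8_mem (hpos : ∀ a, 0 < s a) (hst : Stable16 s p Y)
    (h3b : ∀ z : Ctr3, z.1 = 2 → z ≠ (2, 0, 0) → z ≠ (2, 1, 0) → p 2 (2, 1, 0) < p 2 z) :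
    (2, 0, 0) ∈ Y ∨ (2, 1, 0) ∈ Y := by
  by_contra! h
  refine h.2 (hst.mem_of_mem_chat (by decide)
    (fun y hy hy2 hne => h3b y hy2 (ne_of_mem_of_not_mem hy h.1) hne) ?_)
  rw [chat16_one_eq hpos (mem_insert_self _ _)]
  exact mem_singleton_self _

lemma x1_notMem (hpos : ∀ a, 0 < s a) (hY : Alloc16 s Y) (hst : Stable16 s p Y)
    (h2a : ∀ z : Ctr3, z.1 = 1 → z ≠ (1, 1, 0) → p 1 (1, 1, 0) < p 1 z)
    (h3b : ∀ z : Ctr3, z.1 = 2 → z ≠ (2, 0, 0) → z ≠ (2, 1, 0) → p 2 (2, 1, 0) < p 2 z) :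
    (0, 1, 0) ∉ Y := by
  intro hx1
  have hx7 : (2, 0, 0) ∈ Y := (x7_mem_or_x8_mem hpos hst h3b).resolve_right fun hx8 =>
    absurd (hst.eq_of_snd_fst_eq_one hpos hx1 hx8 rfl rfl) (by decide)
  have hx4 : (1, 1, 0) ∈ Y := by
    refine hst.mem_of_mem_chat (by decide) (fun y _ hy1 hne => h2a y hy1 hne)
      (mem_Chat3_of_isLeast (mem_insert_self _ _) rfl (q16_pos hpos 1) (r16_pos hpos 1 0)
        fun z hz hz1 => key_x4_le ?_)
    rcases mem_insert.mp hz with rfl | hzY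
    · exact le_rfl
    · have hz3 := (hY.1 z hzY).1
      have hz2 : z.1 ≠ 2 := hY.fst_ne_of_snd_fst_ne hzY hx7 (by rw [hz1]; decide)
      omega
  exact absurd (hst.eq_of_snd_fst_eq_one hpos hx1 hx4 rfl rfl) (by decide)

lemma x2_mem_and_x8_mem (hpos : ∀ a, 0 < s a) (hY : Alloc16 s Y) (hst : Stable16 s p Y)
    (h1b : ∀ z : Ctr3, z.1 = 0 → z ≠ (0, 1, 0) → z ≠ (0, 0, 0) → p 0 (0, 0, 0) < p 0 z)
    (h2a : ∀ z : Ctr3, z.1 = 1 → z ≠ (1, 1, 0) → p 1 (1, 1, 0) < p 1 z)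
    (h3b : ∀ z : Ctr3, z.1 = 2 → z ≠ (2, 0, 0) → z ≠ (2, 1, 0) → p 2 (2, 1, 0) < p 2 z) :
    (0, 0, 0) ∈ Y ∧ (2, 1, 0) ∈ Y := by
  have hx2 := (x1_mem_or_x2_mem hpos hst h1b).resolve_left (x1_notMem hpos hY hst h2a h3b)
  refine ⟨hx2, (x7_mem_or_x8_mem hpos hst h3b).resolve_left fun hx7 => ?_⟩
  exact absurd (hst.eq_x2_of_snd_fst_eq_zero hpos hx2 hx7 rfl) (by decide)

lemma x6_mem (hpos : ∀ a, 0 < s a) (hY : Alloc16 s Y) (hst : Stable16 s p Y)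
    (hx2 : (0, 0, 0) ∈ Y) (hx8 : (2, 1, 0) ∈ Y)
    (h2c : ∀ z : Ctr3, z.1 = 1 → z ≠ (1, 1, 0) → z ≠ (1, 0, 0) → z ≠ (1, 2, 0) →
      p 1 (1, 2, 0) < p 1 z) :
    (1, 2, 0) ∈ Y := by
  have hx4 : (1, 1, 0) ∉ Y := fun h =>
    absurd (hst.eq_of_snd_fst_eq_one hpos h hx8 rfl rfl) (by decide)
  have hx5 : (1, 0, 0) ∉ Y := fun h =>
    absurd (hst.eq_x2_of_snd_fst_eq_zero hpos hx2 h rfl) (by decide)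
  refine hst.mem_of_mem_chat (by decide) (fun y hy hy1 hne =>
      h2c y hy1 (ne_of_mem_of_not_mem hy hx4) (ne_of_mem_of_not_mem hy hx5) hne)
    (mem_Chat3_of_isLeast (mem_insert_self _ _) rfl (q16_pos hpos 2) (r16_pos hpos 2 0)
      fun z hz hz2 => key_x6_le ?_)
  rcases mem_insert.mp hz with rfl | hzY
  · exact le_rfl
  · exact Nat.one_le_iff_ne_zero.mpr (hY.fst_ne_of_snd_fst_ne hzY hx2 (by rw [hz2]; decide))

theorem eq_Y₁_of_stable16 (hpos : ∀ a, 0 < s a) (hY : Alloc16 s Y) (hst : Stable16 s p Y)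
    (h1b : ∀ z : Ctr3, z.1 = 0 → z ≠ (0, 1, 0) → z ≠ (0, 0, 0) → p 0 (0, 0, 0) < p 0 z)
    (h2a : ∀ z : Ctr3, z.1 = 1 → z ≠ (1, 1, 0) → p 1 (1, 1, 0) < p 1 z)
    (h2c : ∀ z : Ctr3, z.1 = 1 → z ≠ (1, 1, 0) → z ≠ (1, 0, 0) → z ≠ (1, 2, 0) →
      p 1 (1, 2, 0) < p 1 z)
    (h3b : ∀ z : Ctr3, z.1 = 2 → z ≠ (2, 0, 0) → z ≠ (2, 1, 0) → p 2 (2, 1, 0) < p 2 z) :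
    Y = Y₁ := by
  obtain ⟨hx2, hx8⟩ := x2_mem_and_x8_mem hpos hY hst h1b h2a h3b
  have hx6 := x6_mem hpos hY hst hx2 hx8 h2c
  exact hY.eq_of_subset (by simp [insert_subset_iff, hx2, hx6, hx8]) (by decide)

end Uniqueness

theorem ex7_stable_allocations_general (s : ℕ → ℕ) (hpos : ∀ a, 0 < s a)
    (h01 : s 1 < s 0)
    (pref : ℕ → Ctr3 → ℕ)
    (h1a : ∀ z : Ctr3, z.1 = 0 → z ≠ (0, 1, 0) →
      pref 0 (0, 1, 0) < pref 0 z)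
    (h1b : ∀ z : Ctr3, z.1 = 0 → z ≠ (0, 1, 0) → z ≠ (0, 0, 0) →
      pref 0 (0, 0, 0) < pref 0 z)
    (h2a : ∀ z : Ctr3, z.1 = 1 → z ≠ (1, 1, 0) →
      pref 1 (1, 1, 0) < pref 1 z)
    (h2c : ∀ z : Ctr3, z.1 = 1 → z ≠ (1, 1, 0) → z ≠ (1, 0, 0) →
      z ≠ (1, 2, 0) → pref 1 (1, 2, 0) < pref 1 z)
    (h3a : ∀ z : Ctr3, z.1 = 2 → z ≠ (2, 0, 0) →
      pref 2 (2, 0, 0) < pref 2 z)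
    (h3b : ∀ z : Ctr3, z.1 = 2 → z ≠ (2, 0, 0) → z ≠ (2, 1, 0) →
      pref 2 (2, 1, 0) < pref 2 z)
    (pref2 : Ctr3 → ℕ)
    (k2a : ∀ z : Ctr3, z.1 = 1 → z ≠ (1, 0, 0) →
      pref2 (1, 0, 0) < pref2 z)
    (k2b : ∀ z : Ctr3, z.1 = 1 → z ≠ (1, 0, 0) → z ≠ (1, 2, 0) →
      pref2 (1, 2, 0) < pref2 z)
    :
    (Alloc16 s {(0, 0, 0), (1, 2, 0), (2, 1, 0)} ∧
      Stable16 s pref {(0, 0, 0), (1, 2, 0), (2, 1, 0)}) ∧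
    (∀ Y : Finset Ctr3, Alloc16 s Y → Stable16 s pref Y →
      Y = {(0, 0, 0), (1, 2, 0), (2, 1, 0)}) ∧
    (Stable16 s (fun a => if a = 1 then pref2 else pref a)
      {(0, 0, 0), (1, 2, 0), (2, 1, 0)}) ∧
    (Alloc16 s {(0, 1, 0), (1, 0, 0), (2, 0, 0)} ∧
      Stable16 s (fun a => if a = 1 then pref2 else pref a)
        {(0, 1, 0), (1, 0, 0), (2, 0, 0)}) := by
  refine ⟨⟨alloc16_Y₁ hpos, stable16_Y₁ hpos h1b (fun z hz hm hne => ?_) h3b⟩,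
    fun Y hY hst => eq_Y₁_of_stable16 hpos hY hst h1b h2a h2c h3b,
    stable16_Y₁ hpos h1b (fun z hz hm hne => ?_) h3b,
    alloc16_Y₂ hpos, stable16_Y₂ hpos h01 h1a k2a h3a⟩
  · exact h2c z hz (ne_of_one_lt_snd_fst hm le_rfl) (ne_of_one_lt_snd_fst hm zero_le_one) hne
  · exact k2b z hz (ne_of_one_lt_snd_fst hm zero_le_one) hne

/-- Example 7: with burden-sizes `s(a₁) > s(a₂) ≥ s(a₃)`,
the Example 7 quotas, capacities, priorities, true preferences
`a₁ : x₁ − x₂ − x₃ − …`, `a₂ : x₄ − x₅ − x₆ − …`, `a₃ : x₇ − x₈ − …` (where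
`x₁ = (a₁,m₂,w_l)`, `x₂ = (a₁,m₁,w_l)`, `x₃ = (a₁,m₃,w_l)`,
`x₄ = (a₂,m₂,w_l)`, `x₅ = (a₂,m₁,w_l)`, `x₆ = (a₂,m₃,w_l)`,
`x₇ = (a₃,m₁,w_l)`, `x₈ = (a₃,m₂,w_l)`), the allocation
`Y₁ = {x₂, x₆, x₈}` is the unique stable allocation under the true profile,
while under `a₂`'s misreport `x₅ − x₆ − x₄` both `Y₁` and
`Y₂ = {x₁, x₅, x₇}` are stable. -/
theorem ex7_stable_allocations (s : ℕ → ℕ) (hpos : ∀ a, 0 < s a)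
    (h12 : s 2 ≤ s 1) (h01 : s 1 < s 0)
    (pref : ℕ → Ctr3 → ℕ) (hinj : ∀ a, Function.Injective (pref a))
    (h1a : ∀ z : Ctr3, z.1 = 0 → z ≠ (0, 1, 0) →
      pref 0 (0, 1, 0) < pref 0 z)
    (h1b : ∀ z : Ctr3, z.1 = 0 → z ≠ (0, 1, 0) → z ≠ (0, 0, 0) →
      pref 0 (0, 0, 0) < pref 0 z)
    (h1c : ∀ z : Ctr3, z.1 = 0 → z ≠ (0, 1, 0) → z ≠ (0, 0, 0) →
      z ≠ (0, 2, 0) → pref 0 (0, 2, 0) < pref 0 z)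
    (h2a : ∀ z : Ctr3, z.1 = 1 → z ≠ (1, 1, 0) →
      pref 1 (1, 1, 0) < pref 1 z)
    (h2b : ∀ z : Ctr3, z.1 = 1 → z ≠ (1, 1, 0) → z ≠ (1, 0, 0) →
      pref 1 (1, 0, 0) < pref 1 z)
    (h2c : ∀ z : Ctr3, z.1 = 1 → z ≠ (1, 1, 0) → z ≠ (1, 0, 0) →
      z ≠ (1, 2, 0) → pref 1 (1, 2, 0) < pref 1 z)
    (h3a : ∀ z : Ctr3, z.1 = 2 → z ≠ (2, 0, 0) →
      pref 2 (2, 0, 0) < pref 2 z)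
    (h3b : ∀ z : Ctr3, z.1 = 2 → z ≠ (2, 0, 0) → z ≠ (2, 1, 0) →
      pref 2 (2, 1, 0) < pref 2 z)
    (pref2 : Ctr3 → ℕ) (hinj2 : Function.Injective pref2)
    (k2a : ∀ z : Ctr3, z.1 = 1 → z ≠ (1, 0, 0) →
      pref2 (1, 0, 0) < pref2 z)
    (k2b : ∀ z : Ctr3, z.1 = 1 → z ≠ (1, 0, 0) → z ≠ (1, 2, 0) →
      pref2 (1, 2, 0) < pref2 z)
    (k2c : ∀ z : Ctr3, z.1 = 1 → z ≠ (1, 0, 0) → z ≠ (1, 2, 0) →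
      z ≠ (1, 1, 0) → pref2 (1, 1, 0) < pref2 z)
    :
    (Alloc16 s {(0, 0, 0), (1, 2, 0), (2, 1, 0)} ∧
      Stable16 s pref {(0, 0, 0), (1, 2, 0), (2, 1, 0)}) ∧
    (∀ Y : Finset Ctr3, Alloc16 s Y → Stable16 s pref Y →
      Y = {(0, 0, 0), (1, 2, 0), (2, 1, 0)}) ∧
    (Stable16 s (fun a => if a = 1 then pref2 else pref a)
      {(0, 0, 0), (1, 2, 0), (2, 1, 0)}) ∧
    (Alloc16 s {(0, 1, 0), (1, 0, 0), (2, 0, 0)} ∧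
      Stable16 s (fun a => if a = 1 then pref2 else pref a)
        {(0, 1, 0), (1, 0, 0), (2, 0, 0)}) :=
  ex7_stable_allocations_general s hpos h01 pref h1a h1b h2a h2c h3a h3b pref2 k2a k2b
end

section
/- Single-unit agreement lemma: if all asylum seekers have burden-size equal and two choice rules Ĉ_m and its completion Ĉ'_m are run on a set of contracts X' such that Ĉ'_m(X') contains at most one contract per asylum seeker, then Ĉ'_m(X') = Ĉ_m(X'); in particular, on any input set X' containing at most one contract per asylum seeker, the two rules coincide. -/
/-- A contract at a fixed member state: `(asylum seeker, wait time)`.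
Asylum seekers are labelled by naturals; `π a` is the priority rank of `a`
(smaller rank = higher priority); wait times are naturals. -/
abbrev Ctr := ℕ × ℕ

open Classical in
/-- Pick, from a nonempty set of contracts, the lowest-wait-time contract of the
highest-priority asylum seeker (lexicographic minimum of (rank, wait, agent)). -/
noncomputable def pick (π : ℕ → ℕ) (Z : Finset Ctr) (h : Z.Nonempty) : Ctr :=
  let k := (Z.image fun x => toLex ((π x.1 : ℕ), toLex (x.2, x.1))).min'
    (h.image _)
  ((ofLex (ofLex k).2).2, (ofLex (ofLex k).2).1)

open Classical in
/-- One run of the greedy algorithm with fuel.  `excl = true` excludes all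
contracts of already accepted asylum seekers (the rule `Ĉ_m`), `excl = false`
excludes only already accepted contracts (the completion `Ĉ'_m`). -/
noncomputable def run (s : ℕ → ℕ) (q : ℕ) (r π : ℕ → ℕ) (excl : Bool)
    (X' : Finset Ctr) : ℕ → Finset Ctr → Finset Ctr
  | 0, acc => acc
  | n+1, acc =>
    let Z : Finset Ctr := X'.filter fun x =>
      (acc.filter fun y => y.2 = x.2).card < r x.2 ∧
      (excl = true → ∀ y ∈ acc, y.1 ≠ x.1) ∧
      (excl = false → x ∉ acc)
    if q ≤ acc.sum (fun x => s x.1) then acc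
    else if h : Z.Nonempty then
      run s q r π excl X' n (insert (pick π Z h) acc)
    else acc

/-- The member state choice rule `Ĉ_m`. -/
noncomputable def Chat (s : ℕ → ℕ) (q : ℕ) (r π : ℕ → ℕ)
    (X' : Finset Ctr) : Finset Ctr :=
  run s q r π true X' (X'.card + 1) ∅

/-- The completion `Ĉ'_m` of the member state choice rule. -/
noncomputable def Chat' (s : ℕ → ℕ) (q : ℕ) (r π : ℕ → ℕ)
    (X' : Finset Ctr) : Finset Ctr :=
  run s q r π false X' (X'.card + 1) ∅

/-!
While the completion `Ĉ'_m` never accepts a second contract of an asylum seeker, each contract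
it picks belongs to a not-yet-served asylum seeker and is therefore also eligible for `Ĉ_m`.
The eligible set of `Ĉ_m` is contained in that of `Ĉ'_m`, and `pick` takes a minimum, so both
rules pick the same contract at every step.
-/

/-- The sort key minimised by `pick`. -/
def pickKey (π : ℕ → ℕ) (x : Ctr) : Lex (ℕ × Lex (ℕ × ℕ)) :=
  toLex (π x.1, toLex (x.2, x.1))

lemma pickKey_injective (π : ℕ → ℕ) : Function.Injective (pickKey π) := by
  rintro ⟨a, w⟩ ⟨a', w'⟩ h
  simp only [pickKey, toLex_inj, Prod.mk.injEq] at h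
  simp [h.2.1, h.2.2]

lemma pick_mem_and_pickKey_le (π : ℕ → ℕ) (Z : Finset Ctr) (h : Z.Nonempty) :
    pick π Z h ∈ Z ∧ ∀ z ∈ Z, pickKey π (pick π Z h) ≤ pickKey π z := by
  obtain ⟨x, hx, hkey⟩ := Finset.mem_image.mp ((Z.image (pickKey π)).min'_mem (h.image _))
  have hpick : pick π Z h = x := by
    change ((ofLex (ofLex ((Z.image (pickKey π)).min' _)).2).2,
      (ofLex (ofLex ((Z.image (pickKey π)).min' _)).2).1) = x
    rw [← hkey]
    rfl
  rw [hpick]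
  exact ⟨hx, fun z hz => hkey ▸ Finset.min'_le _ _ (Finset.mem_image_of_mem _ hz)⟩

lemma pick_eq_of_subset (π : ℕ → ℕ) {Z Z' : Finset Ctr} (hZ : Z.Nonempty) (hZ' : Z'.Nonempty)
    (hsub : Z ⊆ Z') (hmem : pick π Z' hZ' ∈ Z) : pick π Z hZ = pick π Z' hZ' := by
  obtain ⟨hpZ, hleZ⟩ := pick_mem_and_pickKey_le π Z hZ
  obtain ⟨-, hleZ'⟩ := pick_mem_and_pickKey_le π Z' hZ'
  exact pickKey_injective π (le_antisymm (hleZ _ hmem) (hleZ' _ (hsub hpZ)))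

open Classical in
/-- The set `Z` of contracts eligible in a step of `run` with accepted set `acc`. -/
def eligible (r : ℕ → ℕ) (excl : Bool) (X' acc : Finset Ctr) : Finset Ctr :=
  X'.filter fun x =>
    (acc.filter fun y => y.2 = x.2).card < r x.2 ∧
    (excl = true → ∀ y ∈ acc, y.1 ≠ x.1) ∧
    (excl = false → x ∉ acc)

open Classical in
lemma run_succ (s : ℕ → ℕ) (q : ℕ) (r π : ℕ → ℕ) (excl : Bool) (X' : Finset Ctr) (n : ℕ)
    (acc : Finset Ctr) :
    run s q r π excl X' (n + 1) acc =
      if q ≤ acc.sum (fun x => s x.1) then acc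
      else if h : (eligible r excl X' acc).Nonempty then
        run s q r π excl X' n (insert (pick π _ h) acc)
      else acc :=
  rfl

lemma eligible_true_subset_false (r : ℕ → ℕ) (X' acc : Finset Ctr) :
    eligible r true X' acc ⊆ eligible r false X' acc := by
  intro x hx
  rw [eligible, Finset.mem_filter] at hx ⊢
  exact ⟨hx.1, hx.2.1, nofun, fun _ hxacc => hx.2.2.1 rfl x hxacc rfl⟩

lemma mem_eligible_true_of_mem_eligible_false (r : ℕ → ℕ) {X' acc : Finset Ctr} {x : Ctr}
    (hx : x ∈ eligible r false X' acc) (hfresh : ∀ y ∈ acc, y.1 ≠ x.1) :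
    x ∈ eligible r true X' acc := by
  rw [eligible, Finset.mem_filter] at hx ⊢
  exact ⟨hx.1, hx.2.1, fun _ => hfresh, nofun⟩

lemma notMem_of_mem_eligible_false (r : ℕ → ℕ) {X' acc : Finset Ctr} {x : Ctr}
    (hx : x ∈ eligible r false X' acc) : x ∉ acc :=
  (Finset.mem_filter.mp hx).2.2.2 rfl

lemma subset_run (s : ℕ → ℕ) (q : ℕ) (r π : ℕ → ℕ) (excl : Bool) (X' : Finset Ctr) (n : ℕ) :
    ∀ acc, acc ⊆ run s q r π excl X' n acc := by
  induction n with
  | zero => exact fun _ => subset_rfl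
  | succ n ih =>
    intro acc
    rw [run_succ]
    split_ifs
    · exact subset_rfl
    · exact (Finset.subset_insert _ _).trans (ih _)
    · exact subset_rfl

lemma run_subset (s : ℕ → ℕ) (q : ℕ) (r π : ℕ → ℕ) (excl : Bool) (X' : Finset Ctr) (n : ℕ) :
    ∀ acc, run s q r π excl X' n acc ⊆ acc ∪ X' := by
  induction n with
  | zero => exact fun _ => Finset.subset_union_left
  | succ n ih =>
    intro acc
    rw [run_succ]
    split_ifs with _ hZ
    · exact Finset.subset_union_left
    · have hpick : pick π _ hZ ∈ X' :=
        Finset.mem_of_mem_filter _ (pick_mem_and_pickKey_le π _ hZ).1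
      refine (ih _).trans ?_
      rw [Finset.insert_union]
      exact Finset.insert_subset (Finset.mem_union_right _ hpick) subset_rfl
    · exact Finset.subset_union_left

lemma fst_ne_of_card_filter_fst_le_one {S : Finset Ctr}
    (hS : ∀ a : ℕ, (S.filter fun x => x.1 = a).card ≤ 1) {x y : Ctr} (hx : x ∈ S) (hy : y ∈ S)
    (hne : y ≠ x) : y.1 ≠ x.1 := fun hfst =>
  hne (Finset.card_le_one.mp (hS x.1) y (Finset.mem_filter.mpr ⟨hy, hfst⟩) x
    (Finset.mem_filter.mpr ⟨hx, rfl⟩))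

lemma run_false_eq_run_true (s : ℕ → ℕ) (q : ℕ) (r π : ℕ → ℕ) (X' : Finset Ctr) (n : ℕ) :
    ∀ acc, (∀ a : ℕ, ((run s q r π false X' n acc).filter fun x => x.1 = a).card ≤ 1) →
      run s q r π false X' n acc = run s q r π true X' n acc := by
  induction n with
  | zero => exact fun _ _ => rfl
  | succ n ih =>
    intro acc hsingle
    rw [run_succ] at hsingle ⊢
    rw [run_succ]
    by_cases hquota : q ≤ acc.sum (fun x => s x.1)
    · rw [if_pos hquota, if_pos hquota]
    rw [if_neg hquota] at hsingle ⊢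
    rw [if_neg hquota]
    by_cases hZf : (eligible r false X' acc).Nonempty
    · rw [dif_pos hZf] at hsingle ⊢
      have hpZf : pick π _ hZf ∈ eligible r false X' acc := (pick_mem_and_pickKey_le π _ hZf).1
      have hout := subset_run s q r π false X' n (insert (pick π _ hZf) acc)
      -- the pick and every contract of `acc` survive to the output, which repeats no asylum seeker
      have hfresh : ∀ y ∈ acc, y.1 ≠ (pick π _ hZf).1 := fun y hy =>
        fst_ne_of_card_filter_fst_le_one hsingle (hout (Finset.mem_insert_self _ _))
          (hout (Finset.mem_insert_of_mem hy))
          (ne_of_mem_of_not_mem hy (notMem_of_mem_eligible_false r hpZf))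
      have hpZt := mem_eligible_true_of_mem_eligible_false r hpZf hfresh
      have hZt : (eligible r true X' acc).Nonempty := ⟨_, hpZt⟩
      rw [dif_pos hZt, pick_eq_of_subset π hZt hZf (eligible_true_subset_false r X' acc) hpZt]
      exact ih _ hsingle
    · have hZt : ¬(eligible r true X' acc).Nonempty := fun h =>
        hZf (h.mono (eligible_true_subset_false r X' acc))
      rw [dif_neg hZf, dif_neg hZt]

lemma chat'_subset (s : ℕ → ℕ) (q : ℕ) (r π : ℕ → ℕ) (X' : Finset Ctr) :
    Chat' s q r π X' ⊆ X' :=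
  (run_subset s q r π false X' (X'.card + 1) ∅).trans (Finset.empty_union X').subset

theorem chat'_eq_chat_of_single_unit_general (s : ℕ → ℕ) (q : ℕ) (r π : ℕ → ℕ)
    (X' : Finset Ctr) :
    ((∀ a : ℕ, ((Chat' s q r π X').filter fun x => x.1 = a).card ≤ 1) →
      Chat' s q r π X' = Chat s q r π X') ∧
    ((∀ a : ℕ, (X'.filter fun x => x.1 = a).card ≤ 1) →
      Chat' s q r π X' = Chat s q r π X') := by
  have hagree := run_false_eq_run_true s q r π X' (X'.card + 1) ∅
  refine ⟨hagree, fun hX' => hagree fun a => ?_⟩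
  exact (Finset.card_le_card (Finset.filter_subset_filter _ (chat'_subset s q r π X'))).trans
    (hX' a)

/-- single-unit agreement: with identical burden-sizes, if
`Ĉ'_m(X')` contains at most one contract per asylum seeker then it equals
`Ĉ_m(X')`; in particular the two rules coincide on any input with at most one
contract per asylum seeker. -/
theorem chat'_eq_chat_of_single_unit (s : ℕ → ℕ) (q : ℕ) (r π : ℕ → ℕ)
    (hπ : Function.Injective π) (hs : ∀ a a' : ℕ, s a = s a')
    (X' : Finset Ctr) :
    ((∀ a : ℕ, ((Chat' s q r π X').filter fun x => x.1 = a).card ≤ 1) →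
      Chat' s q r π X' = Chat s q r π X') ∧
    ((∀ a : ℕ, (X'.filter fun x => x.1 = a).card ≤ 1) →
      Chat' s q r π X' = Chat s q r π X') :=
  chat'_eq_chat_of_single_unit_general s q r π X'
end
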